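/- arXiv:1808.05183 — 2 statements merged into one kernel-verified Lean document; each statement's English description precedes it below -/
import Mathlib

section
/- Let N and M be positive integers, and for each edge index e ∈ Fin M let s(e), t(e) ∈ Fin N, k_e ≥ 0, and l_e ∈ ℝ. Let φ be a continuous linear functional on the product space (Fin N → EuclideanSpace ℝ (Fin 3)). Then the total energy V(r) = −φ(r) + Σ_{e ∈ Fin M} (k_e/2)·(max(‖r_{s(e)} − r_{t(e)}‖ − l_e, 0))² is a convex function of the configuration r : Fin N → EuclideanSpace ℝ (Fin 3). -/
/-!
Each elastic term is convex: the edge length `r ↦ ‖r_s − r_t‖` is a seminorm composed with a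
linear map, subtracting a constant and truncating at `0` keep it convex, and squaring a
nonnegative convex function keeps it convex. The potential term is linear, and sums of convex
functions are convex.
-/

open Finset

theorem ConvexOn.finset_sum {𝕜 E β ι : Type*} [Semiring 𝕜] [PartialOrder 𝕜] [AddCommMonoid E]
    [AddCommMonoid β] [PartialOrder β] [IsOrderedAddMonoid β] [SMul 𝕜 E] [Module 𝕜 β]
    {s : Set E} (hs : Convex 𝕜 s) (t : Finset ι) {f : ι → E → β}
    (hf : ∀ i ∈ t, ConvexOn 𝕜 s (f i)) : ConvexOn 𝕜 s fun x => ∑ i ∈ t, f i x := by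
  classical
  induction t using Finset.induction_on with
  | empty => simpa using convexOn_const 0 hs
  | insert i t hi ih =>
    simp only [sum_insert hi]
    exact (hf i (mem_insert_self i t)).add (ih fun j hj => hf j (mem_insert_of_mem hj))

theorem ConvexOn.sq_max_zero {𝕜 E : Type*} [Field 𝕜] [LinearOrder 𝕜] [IsStrictOrderedRing 𝕜]
    [AddCommGroup E] [Module 𝕜 E] {s : Set E} {f : E → 𝕜} (hf : ConvexOn 𝕜 s f) :
    ConvexOn 𝕜 s fun x => max (f x) 0 ^ 2 :=
  (hf.sup (convexOn_const 0 hf.1)).pow (fun _ _ => le_max_right _ _) 2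

theorem convexOn_mul_sq_max_norm_sub {F E : Type*} [AddCommGroup F] [Module ℝ F]
    [SeminormedAddCommGroup E] [NormedSpace ℝ E] (g : F →ₗ[ℝ] E) {k : ℝ} (hk : 0 ≤ k) (l : ℝ) :
    ConvexOn ℝ Set.univ fun x => k / 2 * max (‖g x‖ - l) 0 ^ 2 :=
  (((convexOn_norm convex_univ).comp_linearMap g).add_const (-l)).sq_max_zero.smul
    (div_nonneg hk zero_le_two)

theorem stmt9_general (N M : ℕ)
    (s t : Fin M → Fin N) (k : Fin M → ℝ) (hk : ∀ e, 0 ≤ k e) (l : Fin M → ℝ)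
    (φ : (Fin N → EuclideanSpace ℝ (Fin 3)) →L[ℝ] ℝ) :
    ConvexOn ℝ Set.univ (fun r : Fin N → EuclideanSpace ℝ (Fin 3) =>
      -φ r + ∑ e : Fin M, (k e / 2) * (max (‖r (s e) - r (t e)‖ - l e) 0) ^ 2) := by
  refine (φ.toLinearMap.concaveOn convex_univ).neg.add
    (ConvexOn.finset_sum convex_univ univ fun e _ => ?_)
  have h := convexOn_mul_sq_max_norm_sub
    (LinearMap.proj (R := ℝ) (φ := fun _ : Fin N => EuclideanSpace ℝ (Fin 3)) (s e) -
      LinearMap.proj (t e)) (hk e) (l e)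
  simpa using h

/-- Convexity of the total energy of the cable net: the sum of a linear potential term
`−φ(r)` and the elastic energies `(k_e/2)·((‖r_{s(e)} − r_{t(e)}‖ − l_e)₊)²` of all
edges is convex in the configuration `r`. -/
theorem stmt9 (N M : ℕ) (hN : 0 < N) (hM : 0 < M)
    (s t : Fin M → Fin N) (k : Fin M → ℝ) (hk : ∀ e, 0 ≤ k e) (l : Fin M → ℝ)
    (φ : (Fin N → EuclideanSpace ℝ (Fin 3)) →L[ℝ] ℝ) :
    ConvexOn ℝ Set.univ (fun r : Fin N → EuclideanSpace ℝ (Fin 3) =>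
      -φ r + ∑ e : Fin M, (k e / 2) * (max (‖r (s e) - r (t e)‖ - l e) 0) ^ 2) :=
  stmt9_general N M s t k hk l φ
end

section
/- Let f : ℝᵖ → ℝ be continuously differentiable and bounded below, let 0 < c₁ < c₂ < 1, and suppose the gradient ∇f is Lipschitz continuous on an open set containing the level set {u : f(u) ≤ f(u₀)}. Let (u_k) be a sequence with u₀ as its initial point such that for each k: either ∇f(u_k) = 0 and u_{k+1} = u_k, or u_{k+1} = u_k + α_k p_k where p_k satisfies ∇f(u_k)ᵀ p_k < 0 and α_k > 0 satisfies the Wolfe conditions f(u_{k+1}) ≤ f(u_k) + c₁ α_k ∇f(u_k)ᵀ p_k and ∇f(u_{k+1})ᵀ p_k ≥ c₂ ∇f(u_k)ᵀ p_k. Then the Zoutendijk condition holds: Σ_{k=0}^{∞} cos²θ_k · ‖∇f(u_k)‖² < ∞, where cos θ_k = −∇f(u_k)ᵀ p_k / (‖∇f(u_k)‖ · ‖p_k‖) on the steps with ∇f(u_k) ≠ 0 (those terms being taken as 0 otherwise). -/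
/-!
Along a Wolfe step `x ↦ x + α p` the curvature condition and the Lipschitz bound on `∇f` give
`(1 - c₂) (-⟪∇f x, p⟫) ≤ K α ‖p‖²`, a lower bound on the step length; inserted into the
sufficient-decrease condition it bounds `cos²θ ‖∇f x‖² = ⟪∇f x, p⟫² / ‖p‖²` by a fixed multiple of
the decrease of `f`. The decreases telescope, and `f` is bounded below.
-/

open RealInnerProductSpace Classical

open Finset in
theorem summable_of_le_mul_sub_succ {a b : ℕ → ℝ} {C : ℝ} (ha : ∀ k, 0 ≤ a k) (hC : 0 ≤ C)
    (hab : ∀ k, a k ≤ C * (b k - b (k + 1))) (hb : BddBelow (Set.range b)) : Summable a := by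
  obtain ⟨B, hB⟩ := hb
  refine summable_of_sum_range_le ha (c := C * (b 0 - B)) fun n => ?_
  calc ∑ i ∈ range n, a i ≤ ∑ i ∈ range n, C * (b i - b (i + 1)) := sum_le_sum fun i _ => hab i
    _ = C * (b 0 - b n) := by rw [← mul_sum, sum_range_sub']
    _ ≤ C * (b 0 - B) := by gcongr; exact hB ⟨n, rfl⟩

section WolfeStep

variable {E : Type*} [NormedAddCommGroup E] [InnerProductSpace ℝ E]

theorem one_sub_mul_neg_inner_le_of_curvature {g g' p : E} {α c₂ K : ℝ}
    (hlip : ‖g' - g‖ ≤ K * ‖α • p‖) (hα : 0 < α) (hcurv : c₂ * ⟪g, p⟫ ≤ ⟪g', p⟫) :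
    (1 - c₂) * -⟪g, p⟫ ≤ K * α * ‖p‖ ^ 2 :=
  calc (1 - c₂) * -⟪g, p⟫ ≤ ⟪g' - g, p⟫ := by rw [inner_sub_left]; linarith
    _ ≤ ‖g' - g‖ * ‖p‖ := real_inner_le_norm _ _
    _ ≤ K * ‖α • p‖ * ‖p‖ := by gcongr
    _ = K * α * ‖p‖ ^ 2 := by rw [norm_smul, Real.norm_of_nonneg hα.le]; ring

theorem wolfe_inner_sq_le {g g' p : E} {α c₁ c₂ K y y' : ℝ} (hc₁ : 0 < c₁) (hc₂ : c₂ < 1)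
    (hgp : ⟪g, p⟫ < 0) (hα : 0 < α) (hlip : ‖g' - g‖ ≤ K * ‖α • p‖)
    (hdec : y' ≤ y + c₁ * α * ⟪g, p⟫) (hcurv : c₂ * ⟪g, p⟫ ≤ ⟪g', p⟫) :
    c₁ * (1 - c₂) * ⟪g, p⟫ ^ 2 ≤ K * ‖p‖ ^ 2 * (y - y') := by
  have hlength := one_sub_mul_neg_inner_le_of_curvature hlip hα hcurv
  have hK : 0 ≤ K * ‖p‖ ^ 2 := by nlinarith
  calc c₁ * (1 - c₂) * ⟪g, p⟫ ^ 2 = c₁ * -⟪g, p⟫ * ((1 - c₂) * -⟪g, p⟫) := by ring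
    _ ≤ c₁ * -⟪g, p⟫ * (K * α * ‖p‖ ^ 2) := by gcongr; nlinarith
    _ = K * ‖p‖ ^ 2 * (c₁ * α * -⟪g, p⟫) := by ring
    _ ≤ K * ‖p‖ ^ 2 * (y - y') := by gcongr; linarith

theorem wolfe_cos_sq_mul_norm_sq_le {g g' p : E} {α c₁ c₂ K y y' : ℝ} (hc₁ : 0 < c₁)
    (hc₂ : c₂ < 1) (hgp : ⟪g, p⟫ < 0) (hα : 0 < α) (hlip : ‖g' - g‖ ≤ K * ‖α • p‖)
    (hdec : y' ≤ y + c₁ * α * ⟪g, p⟫) (hcurv : c₂ * ⟪g, p⟫ ≤ ⟪g', p⟫) :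
    (-⟪g, p⟫ / (‖g‖ * ‖p‖)) ^ 2 * ‖g‖ ^ 2 ≤ K / (c₁ * (1 - c₂)) * (y - y') := by
  have hg : g ≠ 0 := by rintro rfl; simp at hgp
  have hp : p ≠ 0 := by rintro rfl; simp at hgp
  have hc : 0 < c₁ * (1 - c₂) := mul_pos hc₁ (by linarith)
  have hpn : 0 < ‖p‖ ^ 2 := by positivity
  have hcos : (-⟪g, p⟫ / (‖g‖ * ‖p‖)) ^ 2 * ‖g‖ ^ 2 = ⟪g, p⟫ ^ 2 / ‖p‖ ^ 2 := by
    field_simp [norm_ne_zero_iff.2 hg]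
  rw [hcos, div_le_iff₀ hpn, div_mul_eq_mul_div, div_mul_eq_mul_div, le_div_iff₀ hc]
  linarith [wolfe_inner_sq_le hc₁ hc₂ hgp hα hlip hdec hcurv]

end WolfeStep

theorem stmt15_general (q : ℕ) (f : EuclideanSpace ℝ (Fin q) → ℝ)
    (hbdd : BddBelow (Set.range f))
    (c₁ c₂ : ℝ) (hc₁ : 0 < c₁) (hc₂ : c₂ < 1)
    (S : Set (EuclideanSpace ℝ (Fin q)))
    (K : NNReal) (hlip : LipschitzOnWith K (fun x => gradient f x) S)
    (u p : ℕ → EuclideanSpace ℝ (Fin q)) (α : ℕ → ℝ)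
    (hlev : {x | f x ≤ f (u 0)} ⊆ S)
    (hstep : ∀ k : ℕ,
      (gradient f (u k) = 0 ∧ u (k + 1) = u k) ∨
      (⟪gradient f (u k), p k⟫ < 0 ∧ 0 < α k ∧ u (k + 1) = u k + α k • p k ∧
        f (u (k + 1)) ≤ f (u k) + c₁ * α k * ⟪gradient f (u k), p k⟫ ∧
        c₂ * ⟪gradient f (u k), p k⟫ ≤ ⟪gradient f (u (k + 1)), p k⟫)) :
    Summable (fun k : ℕ =>
      if gradient f (u k) = 0 then (0 : ℝ)
      else (-⟪gradient f (u k), p k⟫ / (‖gradient f (u k)‖ * ‖p k‖)) ^ 2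
        * ‖gradient f (u k)‖ ^ 2) := by
  have hdecr : Antitone fun k => f (u k) := antitone_nat_of_succ_le fun k => by
    rcases hstep k with ⟨-, hu⟩ | ⟨hgp, hα, -, hdec, -⟩
    · rw [hu]
    · nlinarith [mul_pos hc₁ hα]
  have hmem : ∀ k, u k ∈ S := fun k => hlev (hdecr (Nat.zero_le k))
  refine summable_of_le_mul_sub_succ (C := K / (c₁ * (1 - c₂)))
    (fun k => by split_ifs <;> positivity)
    (div_nonneg K.coe_nonneg (mul_pos hc₁ (sub_pos.2 hc₂)).le) (fun k => ?_)
    (hbdd.mono (Set.range_comp_subset_range u f))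
  rcases hstep k with ⟨h0, hu⟩ | ⟨hgp, hα, hu, hdec, hcurv⟩
  · simp [h0, hu]
  · have hg : gradient f (u k) ≠ 0 := by intro h; simp [h] at hgp
    rw [if_neg hg]
    refine wolfe_cos_sq_mul_norm_sq_le hc₁ hc₂ hgp hα ?_ hdec hcurv
    simpa [hu, dist_eq_norm] using hlip.dist_le_mul _ (hmem (k + 1)) _ (hmem k)

/-- Zoutendijk's condition: for a line-search method with Wolfe step lengths on a
continuously differentiable, bounded-below objective whose gradient is Lipschitz on an
open set containing the initial level set, the series `Σ cos²θ_k ‖∇f(u_k)‖²` converges. -/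
theorem stmt15 (q : ℕ) (f : EuclideanSpace ℝ (Fin q) → ℝ)
    (hf : ContDiff ℝ 1 f) (hbdd : BddBelow (Set.range f))
    (c₁ c₂ : ℝ) (hc₁ : 0 < c₁) (hc₁₂ : c₁ < c₂) (hc₂ : c₂ < 1)
    (S : Set (EuclideanSpace ℝ (Fin q))) (hS : IsOpen S)
    (K : NNReal) (hlip : LipschitzOnWith K (fun x => gradient f x) S)
    (u p : ℕ → EuclideanSpace ℝ (Fin q)) (α : ℕ → ℝ)
    (hlev : {x | f x ≤ f (u 0)} ⊆ S)
    (hstep : ∀ k : ℕ,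
      (gradient f (u k) = 0 ∧ u (k + 1) = u k) ∨
      (⟪gradient f (u k), p k⟫ < 0 ∧ 0 < α k ∧ u (k + 1) = u k + α k • p k ∧
        f (u (k + 1)) ≤ f (u k) + c₁ * α k * ⟪gradient f (u k), p k⟫ ∧
        c₂ * ⟪gradient f (u k), p k⟫ ≤ ⟪gradient f (u (k + 1)), p k⟫)) :
    Summable (fun k : ℕ =>
      if gradient f (u k) = 0 then (0 : ℝ)
      else (-⟪gradient f (u k), p k⟫ / (‖gradient f (u k)‖ * ‖p k‖)) ^ 2
        * ‖gradient f (u k)‖ ^ 2) :=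
  stmt15_general q f hbdd c₁ c₂ hc₁ hc₂ S K hlip u p α hlev hstep
end
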